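/- arXiv:1003.2195 — 2 statements merged into one kernel-verified Lean document; each statement's English description precedes it below -/
import Mathlib

section
/- With R_j as above, the product R_j R_m has a pole of order at most 2 and residue zero at each point z_l, and consequently ∮_{γ_k} R_j(z) R_m(z) dz = 0 for all j, k, m ∈ {1,…,n−1}. -/
/-!
Up to the factor `2πi`, `(w - z_j) R_j(w)` is the polynomial `N_j = 1/(2πi) + (X - z_j)² Q_j`,
and the interpolation condition on `Q_j` says exactly that `N_j` vanishes at every other `z_k`.
Hence for `z_j ≠ z_m` both simple poles of `R_j R_m = (N_j / (X - z_m)) (N_m / (X - z_j))` cancel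
and the product is a polynomial, while `R_j R_m` with a common pole `z_j = z_m` is
`1/((2πi)² (w - z_j)²)` plus a polynomial. Either way `R_j R_m` has a primitive on the plane
punctured at its poles, so it integrates to zero over every closed curve avoiding them.
-/

open Complex Polynomial Metric Set

namespace Complex

variable {E : Type*} [NormedAddCommGroup E] [NormedSpace ℂ E] {f g : ℂ → E} {U V : Set ℂ}

lemma IsExactOn.mono (hf : IsExactOn f V) (hUV : U ⊆ V) : IsExactOn f U :=
  let ⟨F, hF⟩ := hf
  ⟨F, fun w hw => hF w (hUV hw)⟩

lemma IsExactOn.congr (hf : IsExactOn f U) (hfg : EqOn f g U) : IsExactOn g U :=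
  let ⟨F, hF⟩ := hf
  ⟨F, fun w hw => hfg hw ▸ hF w hw⟩

lemma IsExactOn.add (hf : IsExactOn f U) (hg : IsExactOn g U) :
    IsExactOn (fun w => f w + g w) U :=
  let ⟨F, hF⟩ := hf
  let ⟨G, hG⟩ := hg
  ⟨fun w => F w + G w, fun w hw => (hF w hw).add (hG w hw)⟩

lemma isExactOn_const_div_sub_sq (d a : ℂ) : IsExactOn (fun w => d / (w - a) ^ 2) {a}ᶜ :=
  ⟨fun w => -d * (w - a)⁻¹, fun w hw =>
    ((((hasDerivAt_id' w).sub_const a).inv (sub_ne_zero.2 hw)).const_mul (-d)).congr_deriv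
      (by ring)⟩

lemma _root_.Polynomial.isExactOn_eval (p : ℂ[X]) (U : Set ℂ) : IsExactOn (fun w => p.eval w) U :=
  p.differentiable.isExactOn_univ.mono (subset_univ U)

lemma IsExactOn.circleIntegral_eq_zero [CompleteSpace E] (hf : IsExactOn f U) {c : ℂ} {r : ℝ}
    (hU : sphere c |r| ⊆ U) : (∮ w in C(c, r), f w) = 0 :=
  let ⟨_, hF⟩ := hf
  circleIntegral.integral_eq_zero_of_hasDerivWithinAt' fun w hw => (hF w (hU hw)).hasDerivWithinAt

lemma IsExactOn.intervalIntegral_comp_mul_deriv_eq_zero {f : ℂ → ℂ} (hf : IsExactOn f U)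
    {γ γ' : ℝ → ℂ} {a b : ℝ} (hγ : ∀ t ∈ uIcc a b, HasDerivAt γ (γ' t) t)
    (hγU : ∀ t ∈ uIcc a b, γ t ∈ U) (hclosed : γ a = γ b) :
    ∫ t in a..b, f (γ t) * γ' t = 0 := by
  obtain ⟨F, hF⟩ := hf
  by_cases hint : IntervalIntegrable (fun t => f (γ t) * γ' t) MeasureTheory.volume a b
  · rw [intervalIntegral.integral_eq_sub_of_hasDerivAt
      (fun t ht => (hF _ (hγU t ht)).comp t (hγ t ht)) hint]
    simp [hclosed]
  · -- a non-integrable integrand has integral `0` by convention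
    exact intervalIntegral.integral_undef hint

end Complex

lemma Set.Finite.exists_pos_forall_sphere_subset_compl {α : Type*} [MetricSpace α]
    {s : Set α} (hs : s.Finite) (c : α) :
    ∃ r₀ > 0, ∀ r, 0 < r → r < r₀ → sphere c r ⊆ sᶜ := by
  obtain ⟨r₀, hr₀, hball⟩ := Metric.isOpen_iff.1 (hs.sdiff (t := {c})).isClosed.isOpen_compl c
    (fun hc => hc.2 rfl)
  refine ⟨r₀, hr₀, fun r hr hrr₀ w hw hws => hball (mem_ball.2 (hw ▸ hrr₀)) ⟨hws, ?_⟩⟩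
  rintro rfl
  exact hr.ne (by simpa using hw)

/-- `R_j` in the notation of the paper is `poleKernel (2πi) z_j Q_j`. -/
noncomputable def poleKernel (c a : ℂ) (p : ℂ[X]) (w : ℂ) : ℂ :=
  1 / (c * (w - a)) + (w - a) * p.eval w

noncomputable def poleKernelNumerator (c a : ℂ) (p : ℂ[X]) : ℂ[X] :=
  C c⁻¹ + (X - C a) ^ 2 * p

section poleKernel

variable {c a b w : ℂ} {p q : ℂ[X]}

lemma poleKernel_eq_eval_div (hw : w ≠ a) :
    poleKernel c a p w = (poleKernelNumerator c a p).eval w / (w - a) := by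
  have hwa : w - a ≠ 0 := sub_ne_zero.2 hw
  simp only [poleKernel, poleKernelNumerator, eval_add, eval_mul, eval_pow, eval_sub, eval_X,
    eval_C]
  field_simp

lemma isRoot_poleKernelNumerator (hab : b ≠ a) (hp : p.eval b = -(1 / (c * (b - a) ^ 2))) :
    (poleKernelNumerator c a p).IsRoot b := by
  have hba : b - a ≠ 0 := sub_ne_zero.2 hab
  simp only [IsRoot, poleKernelNumerator, eval_add, eval_mul, eval_pow, eval_sub, eval_X, eval_C,
    hp]
  field_simp
  ring

lemma poleKernel_mul_poleKernel_self (hw : w ≠ a) :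
    poleKernel c a p w * poleKernel c a q w
      = c⁻¹ ^ 2 / (w - a) ^ 2 + (C c⁻¹ * (p + q) + (X - C a) ^ 2 * p * q).eval w := by
  have hwa : w - a ≠ 0 := sub_ne_zero.2 hw
  simp only [poleKernel, eval_add, eval_mul, eval_pow, eval_sub, eval_X, eval_C]
  field_simp
  ring

lemma exists_eqOn_poleKernel_mul_poleKernel (hab : a ≠ b)
    (hp : p.eval b = -(1 / (c * (b - a) ^ 2))) (hq : q.eval a = -(1 / (c * (a - b) ^ 2))) :
    ∃ S : ℂ[X], EqOn (fun w => poleKernel c a p w * poleKernel c b q w) S.eval {a, b}ᶜ := by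
  obtain ⟨Sp, hSp⟩ := dvd_iff_isRoot.2 (isRoot_poleKernelNumerator hab.symm hp)
  obtain ⟨Sq, hSq⟩ := dvd_iff_isRoot.2 (isRoot_poleKernelNumerator hab hq)
  refine ⟨Sp * Sq, fun w hw => ?_⟩
  simp only [mem_compl_iff, mem_insert_iff, mem_singleton_iff, not_or] at hw
  have hwa : w - a ≠ 0 := sub_ne_zero.2 hw.1
  have hwb : w - b ≠ 0 := sub_ne_zero.2 hw.2
  dsimp only
  rw [poleKernel_eq_eval_div hw.1, poleKernel_eq_eval_div hw.2, hSp, hSq]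
  simp only [eval_mul, eval_sub, eval_X, eval_C]
  field_simp

lemma isExactOn_poleKernel_mul_poleKernel
    (h : a ≠ b → p.eval b = -(1 / (c * (b - a) ^ 2)) ∧ q.eval a = -(1 / (c * (a - b) ^ 2))) :
    IsExactOn (fun w => poleKernel c a p w * poleKernel c b q w) {a, b}ᶜ := by
  by_cases hab : a = b
  · subst hab
    refine ((isExactOn_const_div_sub_sq _ a).add (Polynomial.isExactOn_eval _ _)).congr
      (fun w hw => (poleKernel_mul_poleKernel_self hw).symm) |>.mono ?_
    simp
  · obtain ⟨S, hS⟩ := exists_eqOn_poleKernel_mul_poleKernel hab (h hab).1 (h hab).2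
    exact (S.isExactOn_eval _).congr hS.symm

end poleKernel

theorem contour_integral_RjRm_general
    {n : ℕ} (z : Fin n → ℂ)
    (γ γ' : Fin n → ℝ → ℂ)
    (hγd : ∀ k t, HasDerivAt (γ k) (γ' k t) t)
    (hclosed : ∀ k, γ k 0 = γ k 1)
    (havoid : ∀ k t l, γ k t ≠ z l)
    (Q : Fin n → Polynomial ℂ)
    (hQ : ∀ j k, j ≠ k →
      (Q j).eval (z k) = -(1 / (2 * Real.pi * Complex.I * (z k - z j) ^ 2)))
    (R : Fin n → ℂ → ℂ)
    (hR : ∀ j w, R j w = 1 / (2 * Real.pi * Complex.I * (w - z j))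
      + (w - z j) * (Q j).eval w)
    (j k m : Fin n) :
    (∀ l : Fin n, ∃ r₀ > (0:ℝ), ∀ r : ℝ, 0 < r → r < r₀ →
        (∮ w in C(z l, r), R j w * R m w) = 0) ∧
    ∫ t in (0:ℝ)..1, R j (γ k t) * R m (γ k t) * γ' k t = 0 := by
  have hR_eq : R = fun j => poleKernel (2 * Real.pi * I) (z j) (Q j) := funext₂ hR
  have hexact : IsExactOn (fun w => R j w * R m w) {z j, z m}ᶜ := by
    subst hR_eq
    refine isExactOn_poleKernel_mul_poleKernel fun hjm => ⟨hQ j m ?_, hQ m j ?_⟩ <;>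
      rintro rfl <;> exact hjm rfl
  refine ⟨fun l => ?_, ?_⟩
  · obtain ⟨r₀, hr₀, hsphere⟩ := (toFinite {z j, z m}).exists_pos_forall_sphere_subset_compl (z l)
    exact ⟨r₀, hr₀, fun r hr hrr₀ =>
      hexact.circleIntegral_eq_zero ((abs_of_pos hr).symm ▸ hsphere r hr hrr₀)⟩
  · refine hexact.intervalIntegral_comp_mul_deriv_eq_zero (fun t _ => hγd k t) ?_ (hclosed k)
    intro t _
    simp [havoid k t j, havoid k t m]

/-- The product `R_j R_m` has residue zero at each point `z_l` (expressed via small circle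
integrals around `z_l` vanishing), and consequently `∮_{γ_k} R_j R_m dz = 0` for all
`j, k, m`. -/
theorem contour_integral_RjRm
    {n : ℕ} (z : Fin n → ℂ) (hz : Function.Injective z)
    (γ γ' : Fin n → ℝ → ℂ)
    (hγd : ∀ k t, HasDerivAt (γ k) (γ' k t) t)
    (hγc : ∀ k, Continuous (γ' k))
    (hclosed : ∀ k, γ k 0 = γ k 1)
    (havoid : ∀ k t l, γ k t ≠ z l)
    (hwind : ∀ k l, ∫ t in (0:ℝ)..1, γ' k t / (γ k t - z l)
      = if k = l then 2 * Real.pi * Complex.I else 0)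
    (Q : Fin n → Polynomial ℂ)
    (hQ : ∀ j k, j ≠ k →
      (Q j).eval (z k) = -(1 / (2 * Real.pi * Complex.I * (z k - z j) ^ 2)))
    (R : Fin n → ℂ → ℂ)
    (hR : ∀ j w, R j w = 1 / (2 * Real.pi * Complex.I * (w - z j))
      + (w - z j) * (Q j).eval w)
    (j k m : Fin n) :
    (∀ l : Fin n, ∃ r₀ > (0:ℝ), ∀ r : ℝ, 0 < r → r < r₀ →
        (∮ w in C(z l, r), R j w * R m w) = 0) ∧
    ∫ t in (0:ℝ)..1, R j (γ k t) * R m (γ k t) * γ' k t = 0 :=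
  contour_integral_RjRm_general z γ γ' hγd hclosed havoid Q hQ R hR j k m
end

section
/- Suppose Ω is a bounded domain, S : Ω → ℂ ∪ {∞} is meromorphic on Ω with poles exactly at points a₁,…,a_N of orders n₁,…,n_N, continuous up to ∂Ω with S(z) = conj(z) on ∂Ω, and 0 ∉ closure(Ω). If f₁,…,f_N are proper holomorphic maps of Ω onto the unit disc, each continuous on the closure with |f_j| = 1 on ∂Ω, and a_j is a zero of f_j of order 1, then Φ(z) = (∏_j f_j(z)^{n_j}) · S(z)/z extends holomorphically to Ω, is continuous on the closure, and |Φ| = 1 on ∂Ω. -/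
/-!
Writing `f j z = (z - a j) · dslope (f j) (a j) z` cancels the poles of `S z / z`: on `Ω` the
product equals the holomorphic function `g z · ∏ j (dslope (f j) (a j) z)^{n j} / z`. Since the
poles are finitely many interior points, the product is continuous up to `∂Ω`, where
`|f j| = 1` and `|S z / z| = |conj z / z| = 1`.
-/

open Set Filter Topology

section Piecewise

variable {X Y : Type*} {U A : Set X} [∀ x, Decidable (x ∈ U)] {Ψ F : X → Y}

theorem eqOn_piecewise_diff_of_eqOn (s : Set X) (heq : EqOn Ψ F (U \ A)) :
    EqOn (U.piecewise Ψ F) F (s \ A) := by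
  intro z hz
  by_cases hzU : z ∈ U
  · rw [piecewise_eq_of_mem U Ψ F hzU, heq ⟨hzU, hz.2⟩]
  · exact piecewise_eq_of_notMem U Ψ F hzU

theorem continuousOn_closure_piecewise [TopologicalSpace X] [TopologicalSpace Y] (hU : IsOpen U) (hA : IsClosed A) (hAU : A ⊆ U)
    (hΨ : ContinuousOn Ψ U) (hF : ContinuousOn F (closure U \ A)) (heq : EqOn Ψ F (U \ A)) :
    ContinuousOn (U.piecewise Ψ F) (closure U) := by
  intro x hx
  by_cases hxU : x ∈ U
  · have hnhds : U ∈ 𝓝 x := hU.mem_nhds hxU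
    refine ((hΨ.continuousAt hnhds).congr ?_).continuousWithinAt
    exact eventuallyEq_of_mem hnhds fun z hz => (piecewise_eq_of_mem U Ψ F hz).symm
  · have hxA : x ∉ A := fun h => hxU (hAU h)
    have hmem : closure U \ A ∈ 𝓝[closure U] x :=
      sdiff_eq (closure U) A ▸ inter_mem_nhdsWithin _ (hA.isOpen_compl.mem_nhds hxA)
    have hagree := eqOn_piecewise_diff_of_eqOn (closure U) heq
    exact ((hF x ⟨hx, hxA⟩).congr hagree (hagree ⟨hx, hxA⟩)).mono_of_mem_nhdsWithin hmem

end Piecewise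

theorem prod_pow_eq_prod_sub_pow_mul_prod_dslope_pow {ι 𝕜 : Type*} [Fintype ι]
    [NontriviallyNormedField 𝕜] (f : ι → 𝕜 → 𝕜) (a : ι → 𝕜) (n : ι → ℕ)
    (hf : ∀ j, f j (a j) = 0) (z : 𝕜) :
    ∏ j, f j z ^ n j = (∏ j, (z - a j) ^ n j) * ∏ j, dslope (f j) (a j) z ^ n j := by
  rw [← Finset.prod_mul_distrib]
  refine Finset.prod_congr rfl fun j _ => ?_
  rw [← mul_pow, ← smul_eq_mul, sub_smul_dslope, hf, sub_zero]

theorem schwarz_function_proper_quotient_general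
    (Ω : Set ℂ) (hΩo : IsOpen Ω)
    (h0 : (0:ℂ) ∉ closure Ω)
    {N : ℕ} (a : Fin N → ℂ) (ha : ∀ j, a j ∈ Ω)
    (n : Fin N → ℕ)
    (S g : ℂ → ℂ)
    (hg : DifferentiableOn ℂ g Ω)
    (hS : ∀ z ∈ Ω \ Set.range a, S z = g z / ∏ j, (z - a j) ^ (n j))
    (hScont : ContinuousOn S (closure Ω \ Set.range a))
    (hSbd : ∀ z ∈ frontier Ω, S z = starRingEnd ℂ z)
    (f : Fin N → ℂ → ℂ)
    (hfd : ∀ j, DifferentiableOn ℂ (f j) Ω)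
    (hfc : ∀ j, ContinuousOn (f j) (closure Ω))
    (hfu : ∀ j, ∀ z ∈ frontier Ω, ‖f j z‖ = 1)
    (hfz : ∀ j, f j (a j) = 0) :
    ∃ Φ : ℂ → ℂ, DifferentiableOn ℂ Φ Ω ∧ ContinuousOn Φ (closure Ω) ∧
      (∀ z ∈ closure Ω \ Set.range a, Φ z = (∏ j, f j z ^ (n j)) * S z / z) ∧
      (∀ z ∈ frontier Ω, ‖Φ z‖ = 1) := by
  classical
  have hne0 : ∀ z ∈ closure Ω, z ≠ 0 := fun z hz h => h0 (h ▸ hz)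
  set F : ℂ → ℂ := fun z => (∏ j, f j z ^ n j) * S z / z
  set Ψ : ℂ → ℂ := fun z => g z * (∏ j, dslope (f j) (a j) z ^ n j) / z
  have hΨ : DifferentiableOn ℂ Ψ Ω := by
    refine (hg.mul (DifferentiableOn.fun_finsetProd fun j _ => ?_)).div differentiableOn_id
      fun z hz => hne0 z (subset_closure hz)
    exact ((Complex.differentiableOn_dslope (hΩo.mem_nhds (ha j))).mpr (hfd j)).pow _
  have heq : EqOn Ψ F (Ω \ range a) := by
    intro z ⟨hz, hza⟩
    have hP : ∏ j, (z - a j) ^ n j ≠ 0 := Finset.prod_ne_zero_iff.mpr fun j _ =>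
      pow_ne_zero _ (sub_ne_zero.mpr fun h => hza ⟨j, h.symm⟩)
    simp only [F, Ψ, hS z ⟨hz, hza⟩, prod_pow_eq_prod_sub_pow_mul_prod_dslope_pow f a n hfz z]
    field_simp
  have hF : ContinuousOn F (closure Ω \ range a) :=
    ((continuousOn_finsetProd _ fun j _ => ((hfc j).mono sdiff_subset).pow _).mul hScont).div
      continuousOn_id fun z hz => hne0 z hz.1
  have hagree := eqOn_piecewise_diff_of_eqOn (closure Ω) heq
  refine ⟨Ω.piecewise Ψ F, hΨ.congr (piecewise_eqOn Ω Ψ F),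
    continuousOn_closure_piecewise hΩo (finite_range a).isClosed (range_subset_iff.mpr ha)
      hΨ.continuousOn hF heq, hagree, fun z hz => ?_⟩
  have hzΩ : z ∉ Ω := (hΩo.frontier_eq ▸ hz).2
  rw [hagree ⟨frontier_subset_closure hz, fun ⟨j, hj⟩ => hzΩ (hj ▸ ha j)⟩]
  simp [F, hSbd z hz, norm_prod, hfu _ z hz, hne0 z (frontier_subset_closure hz)]

/-- If `S` is the Schwarz function of a bounded domain `Ω` with `0 ∉ closure Ω`, with poles
exactly at `a j` of orders `n j`, and `f j` are proper holomorphic maps onto the unit disc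
(continuous on the closure, unimodular on the boundary) with simple zeros at `a j`, then
`Φ(z) = (∏ j f j z ^ n j) · S z / z` extends holomorphically to `Ω`, is continuous on the
closure, and has unit modulus on the boundary. -/
theorem schwarz_function_proper_quotient
    (Ω : Set ℂ) (hΩo : IsOpen Ω) (hΩc : IsConnected Ω) (hΩb : Bornology.IsBounded Ω)
    (h0 : (0:ℂ) ∉ closure Ω)
    {N : ℕ} (a : Fin N → ℂ) (ha : ∀ j, a j ∈ Ω) (hainj : Function.Injective a)
    (n : Fin N → ℕ) (hn : ∀ j, 0 < n j)
    (S g : ℂ → ℂ)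
    (hg : DifferentiableOn ℂ g Ω) (hg0 : ∀ j, g (a j) ≠ 0)
    (hS : ∀ z ∈ Ω \ Set.range a, S z = g z / ∏ j, (z - a j) ^ (n j))
    (hScont : ContinuousOn S (closure Ω \ Set.range a))
    (hSbd : ∀ z ∈ frontier Ω, S z = starRingEnd ℂ z)
    (f : Fin N → ℂ → ℂ)
    (hfd : ∀ j, DifferentiableOn ℂ (f j) Ω)
    (hfc : ∀ j, ContinuousOn (f j) (closure Ω))
    (hfu : ∀ j, ∀ z ∈ frontier Ω, ‖f j z‖ = 1)
    (hfz : ∀ j, f j (a j) = 0) (hfs : ∀ j, deriv (f j) (a j) ≠ 0) :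
    ∃ Φ : ℂ → ℂ, DifferentiableOn ℂ Φ Ω ∧ ContinuousOn Φ (closure Ω) ∧
      (∀ z ∈ closure Ω \ Set.range a, Φ z = (∏ j, f j z ^ (n j)) * S z / z) ∧
      (∀ z ∈ frontier Ω, ‖Φ z‖ = 1) :=
  schwarz_function_proper_quotient_general Ω hΩo h0 a ha n S g hg hS hScont hSbd f hfd hfc hfu hfz
end
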